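/- For every real E with |E| < 4√2/3, the function x ↦ Re f_b(x) on ℝ attains its minimum at the point b_s = E/2, and moreover f_b(b_s) = 0 and f_b'(b_s) = 0. -/

import Mathlib

/-!
At `b_s = E/2` the two complex arguments of `f_b` become `w = E/2 + i√(4-E²)/2` and `-w̄`, the very
points that define `C*`; this gives `f_b(b_s) = 0`, and since `|w| = 1` the derivative
`w + 1/(-w̄) = w - w` vanishes. Up to an additive constant,
`2 Re f_b(x) = x² + log((x-E)² + 1 - E²/4)`, whose derivative has the sign of
`(x - E/2)((x - 3E/4)² + (32 - 9E²)/16)`; for `9E² < 32`, i.e. `|E| < 4√2/3`, the second factor is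
positive, so `E/2` is a global minimum.
-/

/-- The constant `C*` from the paper (principal branch of the logarithm). -/
noncomputable def Cstar (E : ℝ) : ℂ :=
  ((E : ℂ) / 2 + Complex.I * (Real.sqrt (4 - E ^ 2) : ℝ) / 2) ^ 2 / 2
    + Complex.log (-(E : ℂ) / 2 + Complex.I * (Real.sqrt (4 - E ^ 2) : ℝ) / 2)

/-- The function `f_b` from the paper. -/
noncomputable def fb (E : ℝ) (x : ℝ) : ℂ :=
  ((x : ℂ) + Complex.I * (Real.sqrt (4 - E ^ 2) : ℝ) / 2) ^ 2 / 2
    + Complex.log ((x : ℂ) - (E : ℂ) + Complex.I * (Real.sqrt (4 - E ^ 2) : ℝ) / 2)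
    - Cstar E

open Complex Set

noncomputable def reFbProfile (E x : ℝ) : ℝ :=
  x ^ 2 + Real.log ((x - E) ^ 2 + (1 - E ^ 2 / 4))

lemma ofReal_add_I_mul_div_two (x s : ℝ) : (x : ℂ) + I * (s : ℂ) / 2 = ⟨x, s / 2⟩ := by
  apply Complex.ext <;> simp

lemma re_mk_sq (a b : ℝ) : ((⟨a, b⟩ : ℂ) ^ 2).re = a ^ 2 - b ^ 2 := by
  simp [sq]

lemma re_log_mk (a b : ℝ) : (Complex.log ⟨a, b⟩).re = Real.log (a ^ 2 + b ^ 2) / 2 := by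
  rw [log_re, norm_def, normSq_mk, ← sq, ← sq, Real.log_sqrt (by positivity)]

lemma re_fb {E : ℝ} (hE : E ^ 2 ≤ 4) (x : ℝ) :
    (fb E x).re = reFbProfile E x / 2 - (1 - E ^ 2 / 4) / 2 - (Cstar E).re := by
  have hs : (√(4 - E ^ 2) / 2) ^ 2 = 1 - E ^ 2 / 4 := by
    rw [div_pow, Real.sq_sqrt (by linarith)]; ring
  rw [fb, sub_re, add_re, div_ofNat_re, ofReal_add_I_mul_div_two, re_mk_sq, ← ofReal_sub,
    ofReal_add_I_mul_div_two, re_log_mk, hs, reFbProfile]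
  ring

lemma fb_half (E : ℝ) : fb E (E / 2) = 0 := by
  rw [fb, Cstar, sub_eq_zero]
  push_cast
  ring_nf

lemma hasDerivAt_fb {E : ℝ} (hE : E ^ 2 < 4) (x : ℝ) :
    HasDerivAt (fb E) ((x : ℂ) + I * (√(4 - E ^ 2) : ℝ) / 2
      + ((x : ℂ) - E + I * (√(4 - E ^ 2) : ℝ) / 2)⁻¹) x := by
  set c : ℂ := I * (√(4 - E ^ 2) : ℝ) / 2
  have hslit : (x : ℂ) - E + c ∈ slitPlane := by
    have hs : 0 < √(4 - E ^ 2) := Real.sqrt_pos.mpr (by linarith)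
    rw [← ofReal_sub, ofReal_add_I_mul_div_two]
    exact Or.inr (by simp only; positivity)
  have hsq : HasDerivAt (fun z : ℂ => (z + c) ^ 2 / 2) (x + c) x :=
    ((((hasDerivAt_id (x : ℂ)).add_const c).pow 2).div_const 2).congr_deriv (by simp)
  have hlog : HasDerivAt (fun z : ℂ => Complex.log (z - E + c)) (x - E + c)⁻¹ x := by
    simpa using (((hasDerivAt_id (x : ℂ)).sub_const (E : ℂ)).add_const c).clog hslit
  exact ((hsq.add hlog).sub_const (Cstar E)).comp_ofReal

lemma deriv_fb_half {E : ℝ} (hE : E ^ 2 < 4) : deriv (fb E) (E / 2) = 0 := by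
  rw [(hasDerivAt_fb hE (E / 2)).deriv]
  have hs : ((√(4 - E ^ 2) : ℝ) : ℂ) ^ 2 = 4 - (E : ℂ) ^ 2 := by
    rw [← ofReal_pow, Real.sq_sqrt (by linarith)]; push_cast; ring
  have hinv : (((E / 2 : ℝ) : ℂ) - E + I * (√(4 - E ^ 2) : ℝ) / 2)⁻¹
      = -(((E / 2 : ℝ) : ℂ) + I * (√(4 - E ^ 2) : ℝ) / 2) := by
    apply inv_eq_of_mul_eq_one_right
    push_cast
    linear_combination (-((√(4 - E ^ 2) : ℝ) : ℂ) ^ 2 / 4) * I_sq + (1 / 4 : ℂ) * hs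
  rw [hinv, add_neg_cancel]

lemma sq_sub_add_one_sub_sq_div_four_pos {E : ℝ} (hE : E ^ 2 < 4) (x : ℝ) :
    0 < (x - E) ^ 2 + (1 - E ^ 2 / 4) := by
  nlinarith [sq_nonneg (x - E)]

lemma hasDerivAt_reFbProfile {E : ℝ} (hE : E ^ 2 < 4) (x : ℝ) :
    HasDerivAt (reFbProfile E)
      (2 * (x - E / 2) * ((x - 3 * E / 4) ^ 2 + (32 - 9 * E ^ 2) / 16)
        / ((x - E) ^ 2 + (1 - E ^ 2 / 4))) x := by
  have hD := sq_sub_add_one_sub_sq_div_four_pos hE x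
  have hsq : HasDerivAt (fun y => (y - E) ^ 2 + (1 - E ^ 2 / 4)) (2 * (x - E)) x := by
    simpa using (((hasDerivAt_id x).sub_const E).pow 2).add_const (1 - E ^ 2 / 4)
  refine ((hasDerivAt_pow 2 x).add (hsq.log hD.ne')).congr_deriv ?_
  rw [eq_div_iff hD.ne', add_mul, div_mul_cancel₀ _ hD.ne']
  push_cast
  ring

lemma isMinOn_reFbProfile {E : ℝ} (hE : 9 * E ^ 2 < 32) :
    IsMinOn (reFbProfile E) univ (E / 2) := by
  have hE4 : E ^ 2 < 4 := by linarith
  have hderiv := hasDerivAt_reFbProfile hE4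
  have hdiff : Differentiable ℝ (reFbProfile E) := fun x => (hderiv x).differentiableAt
  have hD := sq_sub_add_one_sub_sq_div_four_pos hE4
  have hQ (x : ℝ) : 0 < (x - 3 * E / 4) ^ 2 + (32 - 9 * E ^ 2) / 16 := by
    nlinarith [sq_nonneg (x - 3 * E / 4)]
  refine isMinOn_univ_of_deriv hdiff.continuous.continuousAt hdiff.differentiableOn
    hdiff.differentiableOn (fun x hx => ?_) (fun x hx => ?_) <;> rw [(hderiv x).deriv]
  · exact div_nonpos_of_nonpos_of_nonneg
      (mul_nonpos_of_nonpos_of_nonneg (by linarith [mem_Iio.mp hx]) (hQ x).le) (hD x).le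
  · exact div_nonneg (mul_nonneg (by linarith [mem_Ioi.mp hx]) (hQ x).le) (hD x).le

/-- for `|E| < 4√2/3`, `Re f_b` attains its minimum at `b_s = E/2`,
and `f_b(b_s) = 0`, `f_b'(b_s) = 0`. -/
theorem fb_min (E : ℝ) (hE : |E| < 4 * Real.sqrt 2 / 3) :
    (∀ x : ℝ, (fb E (E / 2)).re ≤ (fb E x).re) ∧
    fb E (E / 2) = 0 ∧
    deriv (fb E) (E / 2) = 0 := by
  have h9 : 9 * E ^ 2 < 32 := by
    have h := pow_lt_pow_left₀ hE (abs_nonneg E) two_ne_zero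
    rw [sq_abs, div_pow, mul_pow, Real.sq_sqrt zero_le_two] at h
    linarith
  have h4 : E ^ 2 < 4 := by linarith
  refine ⟨fun x => ?_, fb_half E, deriv_fb_half h4⟩
  rw [re_fb h4.le, re_fb h4.le]
  have := isMinOn_iff.mp (isMinOn_reFbProfile h9) x (mem_univ x)
  linarith
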